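/- Assume A is a special extension of E (finite symmetric integral relation algebras), a and b are distinct diversity atoms of E, and u, v are diversity atoms of C_E(A) with u ≤ J(a,0) and v ≤ J(b,0). Then u;v = J(a;b, 0) in C_E(A). In particular, if a;b = 0' then u;v = 0'. -/

import Mathlib

universe u v

/-- Non-associative relation algebras: Boolean algebras with a binary
relative multiplication `comp`, unary converse `conv`, and identity `ide`. -/
class NA (α : Type u) extends BooleanAlgebra α where
  comp : α → α → α
  conv : α → α
  ide : α
  comp_ide : ∀ x : α, comp x ide = x
  ide_comp : ∀ x : α, comp ide x = x
  conv_conv : ∀ x : α, conv (conv x) = x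
  conv_sup : ∀ x y : α, conv (x ⊔ y) = conv x ⊔ conv y
  comp_sup : ∀ x y z : α, comp x (y ⊔ z) = comp x y ⊔ comp x z
  sup_comp : ∀ x y z : α, comp (x ⊔ y) z = comp x z ⊔ comp y z
  peirce1 : ∀ x y z : α, comp x y ⊓ z = ⊥ ↔ comp (conv x) z ⊓ y = ⊥
  peirce2 : ∀ x y z : α, comp x y ⊓ z = ⊥ ↔ comp z (conv y) ⊓ x = ⊥

/-- Relation algebras: associative non-associative relation algebras. -/
class RA (α : Type u) extends NA α where
  comp_assoc : ∀ x y z : α, comp (comp x y) z = comp x (comp y z)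

namespace NA

variable {α : Type u} [NA α]

/-- The diversity element 0'. -/
def div : α := (ide : α)ᶜ

/-- Converse is the identity. -/
def Symmetric (α : Type u) [NA α] : Prop := ∀ x : α, conv x = x

/-- The identity 1' is an atom. -/
def Integral (α : Type u) [NA α] : Prop := IsAtom (ide : α)

/-- A diversity atom: an atom below 0'. -/
def DivAtom (x : α) : Prop := IsAtom x ∧ x ≤ (div : α)

/-- A subalgebra of a (non-associative) relation algebra. -/
structure Subalgebra (α : Type u) [NA α] where
  carrier : Set α
  bot_mem : ⊥ ∈ carrier
  top_mem : ⊤ ∈ carrier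
  ide_mem : ide ∈ carrier
  compl_mem : ∀ x ∈ carrier, xᶜ ∈ carrier
  sup_mem : ∀ x ∈ carrier, ∀ y ∈ carrier, x ⊔ y ∈ carrier
  comp_mem : ∀ x ∈ carrier, ∀ y ∈ carrier, comp x y ∈ carrier
  conv_mem : ∀ x ∈ carrier, conv x ∈ carrier

/-- An atom of a subalgebra: a minimal nonzero element of the subalgebra. -/
def Subalgebra.AtomOf (E : Subalgebra α) (a : α) : Prop :=
  a ∈ E.carrier ∧ a ≠ ⊥ ∧ ∀ b ∈ E.carrier, b ≤ a → b = ⊥ ∨ b = a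

/-- A diversity atom of a subalgebra. -/
def Subalgebra.DivAtomOf (E : Subalgebra α) (a : α) : Prop :=
  E.AtomOf a ∧ a ≤ (div : α)

/-- `α` is (a copy of) the algebra E^{23}_q with atoms `e 0 = 1', e 1, …, e (q-1)`:
symmetric, integral, distinct diversity atoms multiply to 0', and
`e i ; e i = (e i)ᶜ` for diversity atoms. -/
def IsE23 (q : ℕ) (e : Fin q → α) : Prop :=
  Symmetric α ∧ Integral α ∧
  Function.Injective e ∧ (∀ i : Fin q, (i : ℕ) = 0 → e i = ide) ∧
  (∀ i, IsAtom (e i)) ∧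
  (∀ x : α, IsAtom x → ∃ i, x = e i) ∧
  (∀ i j : Fin q, (i : ℕ) ≠ 0 → (j : ℕ) ≠ 0 → i ≠ j →
    comp (e i) (e j) = (div : α)) ∧
  (∀ i : Fin q, (i : ℕ) ≠ 0 → comp (e i) (e i) = (e i)ᶜ)

/-- The subalgebra `Q` of `α` is a copy of E^{23}_q with atoms `e i`. -/
def IsE23Sub (Q : Subalgebra α) (q : ℕ) (e : Fin q → α) : Prop :=
  Function.Injective e ∧ (∀ i : Fin q, (i : ℕ) = 0 → e i = ide) ∧
  (∀ i, Q.AtomOf (e i)) ∧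
  (∀ x : α, Q.AtomOf x → ∃ i, x = e i) ∧
  (∀ i j : Fin q, (i : ℕ) ≠ 0 → (j : ℕ) ≠ 0 → i ≠ j →
    comp (e i) (e j) = (div : α)) ∧
  (∀ i : Fin q, (i : ℕ) ≠ 0 → comp (e i) (e i) = (e i)ᶜ)

/-- `cov` is a cover map for the subalgebra `E`: it sends each atom of the
ambient algebra to the atom of `E` containing it. -/
def CoverMap (E : Subalgebra α) (cov : α → α) : Prop :=
  ∀ x : α, IsAtom x → E.AtomOf (cov x) ∧ x ≤ cov x

/-- The ambient atomic algebra is obtained from the subalgebra `B` by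
splitting, with cover map `cov`. -/
def Splitting (B : Subalgebra α) (cov : α → α) : Prop :=
  CoverMap B cov ∧
  (∀ x y : α, DivAtom x → DivAtom y →
    (x = conv y → comp x y = comp (cov x) (cov y)) ∧
    (x ≠ conv y → comp x y = comp (cov x) (cov y) ⊓ (div : α)))

/-- The ambient algebra is a special extension of its subalgebra `E`. -/
def SpecialExt (E : Subalgebra α) : Prop :=
  (∀ a b c : α, E.DivAtomOf a → E.DivAtomOf b → E.DivAtomOf c →
    ¬(a = b ∧ b = c) → c ≤ comp a b →
    ∀ x y : α, IsAtom x → IsAtom y → x ≤ a → y ≤ b → c ≤ comp x y) ∧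
  (∀ a : α, E.DivAtomOf a → a ≤ comp a a →
    ∀ x y : α, IsAtom x → IsAtom y → x ≤ a → y ≤ a → comp x y ⊓ a ≠ ⊥)

/-- A flexible atom. -/
def Flexible (a : α) : Prop :=
  DivAtom a ∧ comp a a = ⊤ ∧
  ∀ x : α, DivAtom x → x ≠ a → comp x a = (div : α)

/-- A flexible atom of a subalgebra. -/
def FlexibleOf (E : Subalgebra α) (a : α) : Prop :=
  E.DivAtomOf a ∧ comp a a = ⊤ ∧
  ∀ x : α, E.DivAtomOf x → x ≠ a → comp x a = (div : α)

/-- A flexible trio of diversity atoms. -/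
def FlexTrio (a b c : α) : Prop :=
  DivAtom a ∧ DivAtom b ∧ DivAtom c ∧ a ≠ b ∧ a ≠ c ∧ b ≠ c ∧
  comp a a = ⊤ ∧ comp b b = ⊤ ∧ comp c c = ⊤ ∧
  comp a b = (div : α) ∧ comp a c = (div : α) ∧ comp b c = (div : α) ∧
  ∀ x : α, IsAtom x → x ∉ ({(ide : α), a, b, c} : Set α) →
    (comp x a = (div : α) ∧ comp x b = (div : α)) ∨
    (comp x a = (div : α) ∧ comp x c = (div : α)) ∨
    (comp x b = (div : α) ∧ comp x c = (div : α))

/-- A flexible trio of diversity atoms of a subalgebra. -/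
def FlexTrioOf (E : Subalgebra α) (a b c : α) : Prop :=
  E.DivAtomOf a ∧ E.DivAtomOf b ∧ E.DivAtomOf c ∧ a ≠ b ∧ a ≠ c ∧ b ≠ c ∧
  comp a a = ⊤ ∧ comp b b = ⊤ ∧ comp c c = ⊤ ∧
  comp a b = (div : α) ∧ comp a c = (div : α) ∧ comp b c = (div : α) ∧
  ∀ d : α, E.DivAtomOf d → d ∉ ({a, b, c} : Set α) →
    (comp d a = (div : α) ∧ comp d b = (div : α)) ∨
    (comp d a = (div : α) ∧ comp d c = (div : α)) ∨
    (comp d b = (div : α) ∧ comp d c = (div : α))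

/-- Basic k-by-k matrices of atoms. -/
def BasicMatrix (k : ℕ) (μ : Fin k → Fin k → α) : Prop :=
  (∀ i j, IsAtom (μ i j)) ∧ (∀ i, μ i i ≤ (ide : α)) ∧
  (∀ i j, conv (μ i j) = μ j i) ∧
  (∀ i j l, μ i j ≤ comp (μ i l) (μ l j))

/-- The identity condition for a basic matrix. -/
def IdCond (k : ℕ) (μ : Fin k → Fin k → α) : Prop :=
  ∀ i j, μ i j = (ide : α) ↔ i = j

/-- The 1-point extension property. -/
def OnePointExt (α : Type u) [NA α] : Prop :=
  ∀ (k : ℕ) (μ : Fin k → Fin k → α), BasicMatrix k μ → IdCond k μ →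
  ∀ x y : α, DivAtom x → DivAtom y → ∀ i j : Fin k, i ≠ j → μ i j ≤ comp x y →
  ∃ μ' : Fin (k + 1) → Fin (k + 1) → α, BasicMatrix (k + 1) μ' ∧ IdCond (k + 1) μ' ∧
    (∀ l m : Fin k, μ' l.castSucc m.castSucc = μ l m) ∧
    μ' i.castSucc (Fin.last k) = x ∧ μ' (Fin.last k) j.castSucc = y

/-- A representation of `α` over a base set `X`. -/
structure Representation (α : Type u) [NA α] (X : Type v) where
  toFun : α → Set (X × X)
  inj : Function.Injective toFun
  map_sup : ∀ a b : α, toFun (a ⊔ b) = toFun a ∪ toFun b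
  map_compl : ∀ a : α, toFun aᶜ = toFun ⊤ \ toFun a
  map_comp : ∀ a b : α,
    toFun (comp a b) = {p | ∃ z, (p.1, z) ∈ toFun a ∧ (z, p.2) ∈ toFun b}
  map_conv : ∀ a : α, toFun (conv a) = {p | (p.2, p.1) ∈ toFun a}
  map_ide : toFun ide = {p | p ∈ toFun ⊤ ∧ p.1 = p.2}

/-- A complete representation: preserves all existing joins. -/
def Representation.IsComplete {α : Type u} [NA α] {X : Type v}
    (r : Representation α X) : Prop :=
  ∀ (S : Set α) (s : α), IsLUB S s → r.toFun s = ⋃ a ∈ S, r.toFun a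

/-- Representability. -/
def Representable (α : Type u) [NA α] : Prop :=
  ∃ X : Type u, Nonempty (Representation α X)

/-- A representation of a subalgebra `E` over a base set `X`. -/
structure SubRepresentation (E : Subalgebra α) (X : Type v) where
  toFun : α → Set (X × X)
  inj : ∀ x ∈ E.carrier, ∀ y ∈ E.carrier, toFun x = toFun y → x = y
  map_sup : ∀ x ∈ E.carrier, ∀ y ∈ E.carrier, toFun (x ⊔ y) = toFun x ∪ toFun y
  map_compl : ∀ x ∈ E.carrier, toFun xᶜ = toFun ⊤ \ toFun x
  map_comp : ∀ x ∈ E.carrier, ∀ y ∈ E.carrier,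
    toFun (comp x y) = {p | ∃ z, (p.1, z) ∈ toFun x ∧ (z, p.2) ∈ toFun y}
  map_conv : ∀ x ∈ E.carrier, toFun (conv x) = {p | (p.2, p.1) ∈ toFun x}
  map_ide : toFun ide = {p | p ∈ toFun ⊤ ∧ p.1 = p.2}

/-- A homomorphism of (non-associative) relation algebras. -/
structure Hom (α : Type u) (β : Type v) [NA α] [NA β] where
  toFun : α → β
  map_sup : ∀ a b : α, toFun (a ⊔ b) = toFun a ⊔ toFun b
  map_compl : ∀ a : α, toFun aᶜ = (toFun a)ᶜ
  map_comp : ∀ a b : α, toFun (comp a b) = comp (toFun a) (toFun b)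
  map_conv : ∀ a : α, toFun (conv a) = conv (toFun a)
  map_ide : toFun ide = ide

/-- The thinning relation T(i,j,k) ⟺ (i ≤ j = k) ∨ (j ≤ k = i) ∨ (k ≤ i = j). -/
def T3 (i j k : ℕ) : Prop :=
  (i ≤ j ∧ j = k) ∨ (j ≤ k ∧ k = i) ∨ (k ≤ i ∧ i = j)

/-- The type of diversity atoms of `α`. -/
abbrev DAt (α : Type u) [NA α] : Type u := {x : α // DivAtom x}

/-- Atoms of the algebra C_E(A): the identity atom `none` together with
copies `some (x, i)` of each diversity atom `x` of `A`, for `i ∈ ω`. -/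
abbrev CAtom (α : Type u) [NA α] : Type u := Option (DAt α × ℕ)

/-- The cycle relation of the atom structure of C_E(A), relative to the cover
map `cov` of the subalgebra E. -/
def Cyc (cov : α → α) : CAtom α → CAtom α → CAtom α → Prop
  | none, none, none => True
  | none, some p, some q => p = q
  | some p, none, some q => p = q
  | some p, some q, none => p = q
  | some p, some q, some r =>
      r.1.1 ≤ comp p.1.1 q.1.1 ∧
      (cov p.1.1 = cov q.1.1 ∧ cov q.1.1 = cov r.1.1 → T3 p.2 q.2 r.2)
  | _, _, _ => False

/-- Relative multiplication in the complex algebra C_E(A). -/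
def Ccomp (cov : α → α) (X Y : Set (CAtom α)) : Set (CAtom α) :=
  {w | ∃ u ∈ X, ∃ v ∈ Y, Cyc cov u v w}

/-- The element J(a, n) of C_E(A). -/
def Jel (a : α) (n : ℕ) : Set (CAtom α) :=
  {w | (∃ p : DAt α × ℕ, w = some p ∧ p.1.1 ≤ a ∧ n ≤ p.2) ∨
       (w = none ∧ (ide : α) ≤ a)}

/-- The atom set B_n of the finite subalgebra of C_E(A). -/
def Bset (E : Subalgebra α) (n : ℕ) : Set (Set (CAtom α)) :=
  {s | s = ({none} : Set (CAtom α))} ∪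
  {s | ∃ (x : DAt α) (i : ℕ), i < n ∧ s = {some (x, i)}} ∪
  {s | ∃ a : α, E.DivAtomOf a ∧ s = Jel a n}

/-- Subalgebra of C_E(A) generated by a set `G` of elements. -/
inductive GenFrom (cov : α → α) (G : Set (Set (CAtom α))) : Set (CAtom α) → Prop
  | base {s : Set (CAtom α)} : s ∈ G → GenFrom cov G s
  | bot : GenFrom cov G ∅
  | idel : GenFrom cov G ({none} : Set (CAtom α))
  | compl {s : Set (CAtom α)} : GenFrom cov G s → GenFrom cov G sᶜ
  | sup {s t : Set (CAtom α)} : GenFrom cov G s → GenFrom cov G t →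
      GenFrom cov G (s ∪ t)
  | cmp {s t : Set (CAtom α)} : GenFrom cov G s → GenFrom cov G t →
      GenFrom cov G (Ccomp cov s t)

/-- Membership in the subalgebra B of C_E(A) generated by the atoms. -/
def Gen (cov : α → α) : Set (CAtom α) → Prop :=
  GenFrom cov {s | ∃ w : CAtom α, s = {w}}

end NA


/-!
Since `a ≠ b`, the covers of `p.1` and `q.1` differ, so the thinning condition `T3` never
applies and `some p ; some q` is the set of all `some r` with `r ≤ p.1 ; q.1`. Monotonicity
gives `r ≤ a ; b` for these. Conversely, if `r ≤ a ; b` then the cover `c` of `r` is a diversity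
atom of `E` below `a ; b`, and the special extension property (for the non-constant triple
`(a, b, c)`) gives `r ≤ c ≤ p.1 ; q.1`. Finally `1' ≰ a ; b` because `a ; b ⊓ 1' = ⊥` iff
`a ⊓ b = ⊥`, by symmetry and the Peirce law.
-/

theorem IsAtom.inf_ne_bot_of_le_of_le {β : Type*} [Lattice β] [OrderBot β] {x a b : β}
    (hx : IsAtom x) (ha : x ≤ a) (hb : x ≤ b) : a ⊓ b ≠ ⊥ :=
  fun h => hx.1 (le_bot_iff.mp (h ▸ le_inf ha hb))

namespace NA

variable {α : Type*} [NA α]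

theorem comp_mono {x x' y y' : α} (hx : x ≤ x') (hy : y ≤ y') : comp x y ≤ comp x' y' :=
  calc comp x y ≤ comp x' y := by
        rw [← sup_eq_right.mpr hx, sup_comp]; exact le_sup_left
    _ ≤ comp x' y' := by
        rw [← sup_eq_right.mpr hy, comp_sup]; exact le_sup_left

theorem comp_bot (x : α) : comp x ⊥ = ⊥ := by
  simpa using (peirce1 x ⊥ ⊤).mpr (inf_bot_eq _)

theorem ide_ne_bot_of_ne_bot {x : α} (hx : x ≠ ⊥) : (ide : α) ≠ ⊥ := fun h =>
  hx (by rw [← comp_ide x, h, comp_bot])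

theorem comp_inf_ide_eq_bot (hsym : Symmetric α) {a b : α} (hab : a ⊓ b = ⊥) :
    comp a b ⊓ ide = ⊥ := by
  rwa [peirce1, hsym, comp_ide]

theorem Subalgebra.inf_mem (E : Subalgebra α) {x y : α} (hx : x ∈ E.carrier)
    (hy : y ∈ E.carrier) : x ⊓ y ∈ E.carrier := by
  simpa using E.compl_mem _ (E.sup_mem _ (E.compl_mem _ hx) _ (E.compl_mem _ hy))

theorem Subalgebra.AtomOf.le_of_inf_ne_bot {E : Subalgebra α} {a b : α} (ha : E.AtomOf a)
    (hb : b ∈ E.carrier) (hab : a ⊓ b ≠ ⊥) : a ≤ b :=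
  (ha.2.2 _ (E.inf_mem ha.1 hb) inf_le_left).resolve_left hab ▸ inf_le_right

theorem Subalgebra.AtomOf.eq_of_inf_ne_bot {E : Subalgebra α} {a b : α} (ha : E.AtomOf a)
    (hb : E.AtomOf b) (hab : a ⊓ b ≠ ⊥) : a = b :=
  le_antisymm (ha.le_of_inf_ne_bot hb.1 hab) (hb.le_of_inf_ne_bot ha.1 (inf_comm a b ▸ hab))

theorem Subalgebra.AtomOf.inf_eq_bot_of_ne {E : Subalgebra α} {a b : α} (ha : E.AtomOf a)
    (hb : E.AtomOf b) (hab : a ≠ b) : a ⊓ b = ⊥ := by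
  by_contra h
  exact hab (ha.eq_of_inf_ne_bot hb h)

namespace CoverMap

variable {E : Subalgebra α} {cov : α → α}

theorem le_of_le (hcov : CoverMap E cov) {x b : α} (hx : IsAtom x) (hb : b ∈ E.carrier)
    (hxb : x ≤ b) : cov x ≤ b :=
  (hcov x hx).1.le_of_inf_ne_bot hb (hx.inf_ne_bot_of_le_of_le (hcov x hx).2 hxb)

theorem eq_of_le (hcov : CoverMap E cov) {x a : α} (hx : IsAtom x) (ha : E.AtomOf a)
    (hxa : x ≤ a) : cov x = a :=
  (hcov x hx).1.eq_of_inf_ne_bot ha (hx.inf_ne_bot_of_le_of_le (hcov x hx).2 hxa)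

theorem divAtomOf (hcov : CoverMap E cov) {x : α} (hx : DivAtom x) : E.DivAtomOf (cov x) :=
  ⟨(hcov x hx.1).1, hcov.le_of_le hx.1 (E.compl_mem _ E.ide_mem) hx.2⟩

end CoverMap

theorem SpecialExt.le_comp_of_le_comp {E : Subalgebra α} {cov : α → α} (hspec : SpecialExt E)
    (hcov : CoverMap E cov) {a b x y r : α} (ha : E.DivAtomOf a) (hb : E.DivAtomOf b)
    (hab : a ≠ b) (hx : IsAtom x) (hy : IsAtom y) (hxa : x ≤ a) (hyb : y ≤ b) (hr : DivAtom r)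
    (hrab : r ≤ comp a b) : r ≤ comp x y :=
  have hcab : cov r ≤ comp a b := hcov.le_of_le hr.1 (E.comp_mem a ha.1.1 b hb.1.1) hrab
  (hcov r hr.1).2.trans
    (hspec.1 a b (cov r) ha hb (hcov.divAtomOf hr) (fun h => hab h.1) hcab x y hx hy hxa hyb)

theorem mem_Ccomp_singleton {cov : α → α} {u v w : CAtom α} :
    w ∈ Ccomp cov {u} {v} ↔ Cyc cov u v w := by
  simp [Ccomp]

theorem some_mem_Jel {a : α} {n : ℕ} {p : DAt α × ℕ} :
    (some p : CAtom α) ∈ Jel a n ↔ p.1.1 ≤ a ∧ n ≤ p.2 := by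
  constructor
  · rintro (⟨p, hp, h⟩ | ⟨h, -⟩)
    · exact Option.some_injective _ hp ▸ h
    · exact absurd h (Option.some_ne_none p)
  · exact fun h => Or.inl ⟨p, rfl, h⟩

theorem none_mem_Jel {a : α} {n : ℕ} : (none : CAtom α) ∈ Jel a n ↔ (ide : α) ≤ a := by
  simp [Jel]

theorem Jel_div_zero (hide : (ide : α) ≠ ⊥) : Jel (div : α) 0 = ({none} : Set (CAtom α))ᶜ := by
  ext (_ | r)
  · simpa [none_mem_Jel, div] using hide
  · simpa [some_mem_Jel] using r.1.2.2

theorem Ccomp_some_some_of_cov_ne {cov : α → α} {p q : DAt α × ℕ}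
    (hcov : cov p.1.1 ≠ cov q.1.1) :
    Ccomp cov {some p} {some q} = Jel (comp p.1.1 q.1.1) 0 \ {none} := by
  ext (_ | r)
  · have hne : p ≠ q := fun h => hcov (h ▸ rfl)
    simpa [mem_Ccomp_singleton, Cyc] using hne
  · simp [mem_Ccomp_singleton, Cyc, some_mem_Jel, hcov]

end NA

theorem stmt7_general {α : Type} [RA α]
    (hsym : NA.Symmetric α)
    (E : NA.Subalgebra α) (cov : α → α) (hcov : NA.CoverMap E cov)
    (hspec : NA.SpecialExt E)
    (a b : α) (ha : E.DivAtomOf a) (hb : E.DivAtomOf b) (hab : a ≠ b)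
    (p q : NA.DAt α × ℕ)
    (hp : (some p : NA.CAtom α) ∈ NA.Jel a 0)
    (hq : (some q : NA.CAtom α) ∈ NA.Jel b 0) :
    NA.Ccomp cov {some p} {some q} = NA.Jel (NA.comp a b) 0 ∧
    (NA.comp a b = (NA.div : α) →
      NA.Ccomp cov {some p} {some q} = ({none} : Set (NA.CAtom α))ᶜ) := by
  have hpa : p.1.1 ≤ a := (NA.some_mem_Jel.mp hp).1
  have hqb : q.1.1 ≤ b := (NA.some_mem_Jel.mp hq).1
  have hab_disj : a ⊓ b = ⊥ := ha.1.inf_eq_bot_of_ne hb.1 hab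
  have hide_ne : (NA.ide : α) ≠ ⊥ := NA.ide_ne_bot_of_ne_bot ha.1.2.1
  have hide : ¬ (NA.ide : α) ≤ NA.comp a b := fun h =>
    hide_ne (by simpa [inf_eq_right.mpr h] using NA.comp_inf_ide_eq_bot hsym hab_disj)
  have hcov_ne : cov p.1.1 ≠ cov q.1.1 := by
    rwa [hcov.eq_of_le p.1.2.1 ha.1 hpa, hcov.eq_of_le q.1.2.1 hb.1 hqb]
  have key : NA.Ccomp cov {some p} {some q} = NA.Jel (NA.comp a b) 0 := by
    rw [NA.Ccomp_some_some_of_cov_ne hcov_ne]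
    ext (_ | r)
    · simpa [NA.none_mem_Jel] using hide
    · simp only [Set.mem_sdiff, Set.mem_singleton_iff, reduceCtorEq, not_false_eq_true,
        and_true, NA.some_mem_Jel, zero_le]
      exact ⟨fun h => h.trans (NA.comp_mono hpa hqb), hspec.le_comp_of_le_comp hcov ha hb hab
        p.1.2.1 q.1.2.1 hpa hqb r.1.2⟩
  exact ⟨key, fun hdiv => by rw [key, hdiv, NA.Jel_div_zero hide_ne]⟩

/-- If A is a special extension of E, a ≠ b are diversity atoms of
E, and u, v are diversity atoms of C_E(A) with u ≤ J(a,0), v ≤ J(b,0), then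
u;v = J(a;b,0); in particular if a;b = 0' then u;v = 0'. -/
theorem stmt7 {α : Type} [RA α] [Fintype α]
    (hsym : NA.Symmetric α) (hint : NA.Integral α)
    (E : NA.Subalgebra α) (cov : α → α) (hcov : NA.CoverMap E cov)
    (hspec : NA.SpecialExt E)
    (a b : α) (ha : E.DivAtomOf a) (hb : E.DivAtomOf b) (hab : a ≠ b)
    (p q : NA.DAt α × ℕ)
    (hp : (some p : NA.CAtom α) ∈ NA.Jel a 0)
    (hq : (some q : NA.CAtom α) ∈ NA.Jel b 0) :
    NA.Ccomp cov {some p} {some q} = NA.Jel (NA.comp a b) 0 ∧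
    (NA.comp a b = (NA.div : α) →
      NA.Ccomp cov {some p} {some q} = ({none} : Set (NA.CAtom α))ᶜ) :=
  stmt7_general hsym E cov hcov hspec a b ha hb hab p q hp hq
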